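/- Under Assumption 1, if p₁ > α and p₂ > 1, then at every mixed Nash equilibrium (σ¹*,σ²*) of the routing game the expected attack cost satisfies E_{σ²*}[C₂(μ)] = (1 − α/p₁)·Θ, where Θ is the max-flow value. -/

import Mathlib

open scoped BigOperators Classical

/-- A capacitated network given by its finite edge set, capacities, per-unit
transportation costs, and the (edge sets of its) `s`-`t` paths and loops. -/
structure Network where
  E : Type
  fin : Fintype E
  dec : DecidableEq E
  /-- edge capacities -/
  c : E → ℝ
  /-- per-unit transportation costs -/
  b : E → ℝ
  /-- the `s`-`t` paths, identified with their edge sets -/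
  P : Finset (Finset E)
  /-- the loops, identified with their edge sets -/
  L : Finset (Finset E)
  c_nonneg : ∀ e, 0 ≤ c e
  b_nonneg : ∀ e, 0 ≤ b e
  P_nonempty : P.Nonempty
  P_edges_nonempty : ∀ p ∈ P, p.Nonempty

attribute [instance] Network.fin Network.dec

namespace Network

variable (N : Network)

/-- All paths and loops. -/
noncomputable def Lam : Finset (Finset N.E) := N.P ∪ N.L

/-- The flow through edge `e` induced by the path/loop flow `y`. -/
noncomputable def edgeFlow (y : Finset N.E → ℝ) (e : N.E) : ℝ :=
  ∑ l ∈ N.Lam.filter (fun l => e ∈ l), y l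

/-- Feasibility of a path/loop flow: nonnegative, supported on paths and loops,
and respecting edge capacities. -/
def Feasible (y : Finset N.E → ℝ) : Prop :=
  (∀ l, 0 ≤ y l) ∧ (∀ l, l ∉ N.Lam → y l = 0) ∧ (∀ e, N.edgeFlow y e ≤ N.c e)

/-- The value `F(x)` of the initial flow: total flow on `s`-`t` paths. -/
noncomputable def val (y : Finset N.E → ℝ) : ℝ := ∑ p ∈ N.P, y p

/-- The value `F(x^μ)` of the effective flow after the attack `μ`:
only the flow on paths avoiding all disrupted edges survives. -/
noncomputable def effVal (y : Finset N.E → ℝ) (μ : Finset N.E) : ℝ :=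
  ∑ p ∈ N.P.filter (fun p => Disjoint p μ), y p

/-- Transportation cost `C₁(x) = Σ b_e x_e`. -/
noncomputable def C1 (y : Finset N.E → ℝ) : ℝ := ∑ e, N.b e * N.edgeFlow y e

/-- Cost of an attack, `C₂(μ) = Σ_{e ∈ μ} c_e`. -/
noncomputable def C2 (μ : Finset N.E) : ℝ := ∑ e ∈ μ, N.c e

/-- Transportation cost of a path. -/
noncomputable def pathCost (p : Finset N.E) : ℝ := ∑ e ∈ p, N.b e

/-- `α`: the minimum transportation cost over all `s`-`t` paths. -/
noncomputable def alpha : ℝ := sInf (N.pathCost '' ↑N.P)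

/-- A cut: a set of edges meeting every `s`-`t` path. -/
def IsCut (K : Finset N.E) : Prop := ∀ p ∈ N.P, ¬ Disjoint p K

/-- A minimum cut: a cut of minimum capacity. -/
def IsMinCut (K : Finset N.E) : Prop := N.IsCut K ∧ ∀ K', N.IsCut K' → N.C2 K ≤ N.C2 K'

/-- `Θ`: the maximum flow value. -/
noncomputable def Theta : ℝ := sSup (N.val '' {y | N.Feasible y})

/-- A maximum flow. -/
def IsMaxFlow (y : Finset N.E → ℝ) : Prop :=
  N.Feasible y ∧ ∀ z, N.Feasible z → N.val z ≤ N.val y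

/-- A maximum flow with minimum transportation cost (an element of `Ω`). -/
def IsMFMC (y : Finset N.E → ℝ) : Prop :=
  N.IsMaxFlow y ∧ ∀ z, N.IsMaxFlow z → N.C1 y ≤ N.C1 z

/-- Assumption 1: `x` is a max-flow with minimum transportation cost all of whose
positively used `s`-`t` paths have transportation cost exactly `α`. -/
def Assumption1 (x : Finset N.E → ℝ) : Prop :=
  N.IsMFMC x ∧ ∀ p ∈ N.P, 0 < x p → N.pathCost p = N.alpha

/-- Defender's payoff `u₁(x,μ) = p₁ F(x^μ) - C₁(x)`. -/
noncomputable def u1 (p1 : ℝ) (y : Finset N.E → ℝ) (μ : Finset N.E) : ℝ :=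
  p1 * N.effVal y μ - N.C1 y

/-- Attacker's payoff `u₂(x,μ) = p₂ F(x - x^μ) - C₂(μ)`. -/
noncomputable def u2 (p2 : ℝ) (y : Finset N.E → ℝ) (μ : Finset N.E) : ℝ :=
  p2 * (N.val y - N.effVal y μ) - N.C2 μ

/-- The defender's action set: feasible flows. -/
def Flow : Type := {y : Finset N.E → ℝ // N.Feasible y}

/-- A (finitely supported) mixed strategy of the defender. -/
def MixedF (σ : N.Flow →₀ ℝ) : Prop := (∀ y, 0 ≤ σ y) ∧ (σ.sum fun _ w => w) = 1

/-- A mixed strategy of the attacker. -/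
def MixedA (σ : Finset N.E → ℝ) : Prop := (∀ μ, 0 ≤ σ μ) ∧ ∑ μ, σ μ = 1

/-- Expectation of a function of the flow under the defender's mixed strategy. -/
noncomputable def expF (σ : N.Flow →₀ ℝ) (g : (Finset N.E → ℝ) → ℝ) : ℝ :=
  σ.sum fun y w => w * g y.1

/-- Expectation of a function of the attack under the attacker's mixed strategy. -/
noncomputable def expA (σ : Finset N.E → ℝ) (h : Finset N.E → ℝ) : ℝ :=
  ∑ μ, σ μ * h μ

/-- Expectation of a function of both actions under a mixed strategy profile. -/
noncomputable def expFA (σ1 : N.Flow →₀ ℝ) (σ2 : Finset N.E → ℝ)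
    (g : (Finset N.E → ℝ) → Finset N.E → ℝ) : ℝ :=
  σ1.sum fun y w => w * ∑ μ, σ2 μ * g y.1 μ

/-- Defender's expected payoff. -/
noncomputable def U1 (p1 : ℝ) (σ1 : N.Flow →₀ ℝ) (σ2 : Finset N.E → ℝ) : ℝ :=
  N.expFA σ1 σ2 (N.u1 p1)

/-- Attacker's expected payoff. -/
noncomputable def U2 (p2 : ℝ) (σ1 : N.Flow →₀ ℝ) (σ2 : Finset N.E → ℝ) : ℝ :=
  N.expFA σ1 σ2 (N.u2 p2)

/-- Mixed Nash equilibrium. -/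
def IsNE (p1 p2 : ℝ) (σ1 : N.Flow →₀ ℝ) (σ2 : Finset N.E → ℝ) : Prop :=
  N.MixedF σ1 ∧ N.MixedA σ2 ∧
  (∀ τ1, N.MixedF τ1 → N.U1 p1 τ1 σ2 ≤ N.U1 p1 σ1 σ2) ∧
  (∀ τ2, N.MixedA τ2 → N.U2 p2 σ1 τ2 ≤ N.U2 p2 σ1 σ2)

/-- Pure Nash equilibrium. -/
def IsPureNE (p1 p2 : ℝ) (x : Finset N.E → ℝ) (μ : Finset N.E) : Prop :=
  N.Feasible x ∧
  (∀ y, N.Feasible y → N.u1 p1 y μ ≤ N.u1 p1 x μ) ∧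
  (∀ ν, N.u2 p2 x ν ≤ N.u2 p2 x μ)

end Network

/-! Write `A`, `B`, `W` for the expected flow value, expected surviving flow and expected attack
cost at the equilibrium, and `D = p₁B - αA`. The defender's equilibrium payoff is at most `D`,
since every unit of flow costs at least `α`; it is at least `0` (deviate to the zero flow) and at
least `X = (p₁ - α)Θ - p₁W` (deviate to the flow `x*` of Assumption 1, which loses at most `C₂(μ)`
to an attack `μ`). Deviating to attack a minimum cut with probability `1 - α/p₁`, and nothing
otherwise, gives the attacker `p₂D ≤ X`. As `p₂ > 1`, the bounds `p₂D ≤ X ≤ D` and `0 ≤ D` force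
`D = X = 0`. -/

namespace Network

variable (N : Network)

theorem pathCost_nonneg (l : Finset N.E) : 0 ≤ N.pathCost l :=
  Finset.sum_nonneg fun e _ => N.b_nonneg e

theorem alpha_le_pathCost {p : Finset N.E} (hp : p ∈ N.P) : N.alpha ≤ N.pathCost p :=
  csInf_le ((N.P.finite_toSet.image _).bddBelow) ⟨p, hp, rfl⟩

theorem alpha_nonneg : 0 ≤ N.alpha := by
  obtain ⟨p, hp⟩ := N.P_nonempty
  exact le_csInf ⟨_, p, hp, rfl⟩ fun _ ⟨l, _, hl⟩ => hl ▸ N.pathCost_nonneg l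

theorem feasible_zero : N.Feasible 0 :=
  ⟨fun _ => le_rfl, fun _ _ => rfl, fun e => by simpa [edgeFlow] using N.c_nonneg e⟩

theorem P_subset_Lam : N.P ⊆ N.Lam := Finset.subset_union_left

theorem C1_eq_sum_pathCost (y : Finset N.E → ℝ) :
    N.C1 y = ∑ l ∈ N.Lam, N.pathCost l * y l := by
  simp only [C1, edgeFlow, pathCost, Finset.mul_sum, Finset.sum_mul]
  exact Finset.sum_comm' fun e l => by simp [and_comm]

theorem sum_edgeFlow_eq_sum_inter (y : Finset N.E → ℝ) (μ : Finset N.E) :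
    ∑ e ∈ μ, N.edgeFlow y e = ∑ l ∈ N.Lam, ∑ _e ∈ l ∩ μ, y l :=
  Finset.sum_comm' fun e l => by simp [and_comm, and_assoc]

variable {N}

theorem alpha_mul_val_le_C1 {y : Finset N.E → ℝ} (hy : ∀ l, 0 ≤ y l) :
    N.alpha * N.val y ≤ N.C1 y := by
  rw [val, Finset.mul_sum, C1_eq_sum_pathCost]
  calc ∑ p ∈ N.P, N.alpha * y p
      ≤ ∑ p ∈ N.P, N.pathCost p * y p :=
        Finset.sum_le_sum fun p hp => mul_le_mul_of_nonneg_right (N.alpha_le_pathCost hp) (hy p)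
    _ ≤ ∑ l ∈ N.Lam, N.pathCost l * y l :=
        Finset.sum_le_sum_of_subset_of_nonneg N.P_subset_Lam fun l _ _ =>
          mul_nonneg (N.pathCost_nonneg l) (hy l)

theorem val_sub_effVal_le_C2 {y : Finset N.E → ℝ} (hy : N.Feasible y) (μ : Finset N.E) :
    N.val y - N.effVal y μ ≤ N.C2 μ := by
  rw [val, effVal, ← Finset.sum_filter_add_sum_filter_not N.P (fun p => Disjoint p μ),
    add_sub_cancel_left]
  calc ∑ p ∈ N.P with ¬Disjoint p μ, y p
      ≤ ∑ l ∈ N.Lam with ¬Disjoint l μ, y l :=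
        Finset.sum_le_sum_of_subset_of_nonneg (Finset.filter_subset_filter _ N.P_subset_Lam)
          fun l _ _ => hy.1 l
    _ ≤ ∑ l ∈ N.Lam, ∑ _e ∈ l ∩ μ, y l := by
        rw [Finset.sum_filter]
        refine Finset.sum_le_sum fun l _ => ?_
        split_ifs with h
        · exact Finset.sum_nonneg fun _ _ => hy.1 l
        · rw [Finset.sum_const, nsmul_eq_mul]
          have : (1 : ℝ) ≤ (l ∩ μ).card := by
            exact_mod_cast Finset.card_pos.2 (Finset.not_disjoint_iff_nonempty_inter.1 h)
          nlinarith [hy.1 l]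
    _ = ∑ e ∈ μ, N.edgeFlow y e := (N.sum_edgeFlow_eq_sum_inter y μ).symm
    _ ≤ N.C2 μ := Finset.sum_le_sum fun e _ => hy.2.2 e

theorem IsMaxFlow.val_eq_Theta {x : Finset N.E → ℝ} (hx : N.IsMaxFlow x) : N.val x = N.Theta :=
  (IsGreatest.csSup_eq (s := N.val '' {y | N.Feasible y})
    ⟨⟨x, hx.1, rfl⟩, by rintro _ ⟨z, hz, rfl⟩; exact hx.2 z hz⟩).symm

theorem Feasible.update_zero {y : Finset N.E → ℝ} (hy : N.Feasible y) (l : Finset N.E) :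
    N.Feasible (Function.update y l 0) := by
  have hle : ∀ m, Function.update y l 0 m ≤ y m := fun m => by
    rcases eq_or_ne m l with rfl | hm
    · simpa using hy.1 m
    · simp [hm]
  refine ⟨fun m => ?_, fun m hm => ?_, fun e => (Finset.sum_le_sum fun m _ => hle m).trans (hy.2.2 e)⟩
  · rcases eq_or_ne m l with rfl | hm
    · simp
    · simpa [hm] using hy.1 m
  · rcases eq_or_ne m l with rfl | hml
    · simp
    · simpa [hml] using hy.2.1 m hm

theorem val_update_zero {l : Finset N.E} (hl : l ∉ N.P) (y : Finset N.E → ℝ) :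
    N.val (Function.update y l 0) = N.val y :=
  Finset.sum_congr rfl fun _ hp => Function.update_of_ne (ne_of_mem_of_not_mem hp hl) _ _

theorem C1_update_zero {l : Finset N.E} (hl : l ∈ N.Lam) (y : Finset N.E → ℝ) :
    N.C1 (Function.update y l 0) + N.pathCost l * y l = N.C1 y := by
  simp only [C1_eq_sum_pathCost, ← Finset.add_sum_erase _ _ hl, Function.update_self, mul_zero,
    zero_add]
  rw [add_comm]
  congr 1
  exact Finset.sum_congr rfl fun m hm => by rw [Function.update_of_ne (Finset.ne_of_mem_erase hm)]

/-- Deleting the flow on a costly loop would keep the flow maximal and lower its cost. -/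
theorem IsMFMC.pathCost_mul_eq_zero {x : Finset N.E → ℝ} (hx : N.IsMFMC x) {l : Finset N.E}
    (hl : l ∉ N.P) : N.pathCost l * x l = 0 := by
  by_cases hlL : l ∈ N.Lam
  · have hmax : N.IsMaxFlow (Function.update x l 0) :=
      ⟨hx.1.1.update_zero l, fun z hz => (val_update_zero hl x).symm ▸ hx.1.2 z hz⟩
    have hmin := hx.2 _ hmax
    have hsplit := C1_update_zero hlL x
    exact le_antisymm (by linarith) (mul_nonneg (N.pathCost_nonneg l) (hx.1.1.1 l))
  · rw [hx.1.1.2.1 l hlL, mul_zero]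

theorem Assumption1.C1_eq {x : Finset N.E → ℝ} (hx : N.Assumption1 x) :
    N.C1 x = N.alpha * N.Theta := by
  rw [← hx.1.1.val_eq_Theta, val, Finset.mul_sum, C1_eq_sum_pathCost,
    ← Finset.sum_subset N.P_subset_Lam fun l _ hl => hx.1.pathCost_mul_eq_zero hl]
  refine Finset.sum_congr rfl fun p hp => ?_
  rcases (hx.1.1.1.1 p).lt_or_eq with hpos | hzero
  · rw [hx.2 p hp hpos]
  · rw [← hzero, mul_zero, mul_zero]

theorem expA_sub (σ f g : Finset N.E → ℝ) :
    N.expA σ (fun μ => f μ - g μ) = N.expA σ f - N.expA σ g := by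
  simp only [expA, mul_sub, Finset.sum_sub_distrib]

theorem expA_const_mul (σ f : Finset N.E → ℝ) (a : ℝ) :
    N.expA σ (fun μ => a * f μ) = a * N.expA σ f := by
  simp only [expA, Finset.mul_sum, mul_left_comm]

theorem MixedA.expA_const {σ : Finset N.E → ℝ} (hσ : N.MixedA σ) (a : ℝ) :
    N.expA σ (fun _ => a) = a := by
  rw [expA, ← Finset.sum_mul, hσ.2, one_mul]

theorem MixedA.expA_mono {σ f g : Finset N.E → ℝ} (hσ : N.MixedA σ) (h : ∀ μ, f μ ≤ g μ) :
    N.expA σ f ≤ N.expA σ g :=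
  Finset.sum_le_sum fun μ _ => mul_le_mul_of_nonneg_left (h μ) (hσ.1 μ)

theorem expA_single_add_single (μ ν : Finset N.E) (a b : ℝ) (f : Finset N.E → ℝ) :
    N.expA (Pi.single μ a + Pi.single ν b) f = a * f μ + b * f ν := by
  simp only [expA, Pi.add_apply, add_mul, Finset.sum_add_distrib, Pi.single_apply, ite_mul,
    zero_mul, Finset.sum_ite_eq', Finset.mem_univ, if_true]

theorem MixedA.single_add_single (μ ν : Finset N.E) {q : ℝ} (hq₀ : 0 ≤ q) (hq₁ : q ≤ 1) :
    N.MixedA (Pi.single μ q + Pi.single ν (1 - q)) := by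
  refine ⟨fun ρ => ?_, ?_⟩
  · simp only [Pi.add_apply, Pi.single_apply]
    split_ifs <;> linarith
  · simpa [expA] using N.expA_single_add_single μ ν q (1 - q) 1

theorem expF_sub (σ : N.Flow →₀ ℝ) (f g : (Finset N.E → ℝ) → ℝ) :
    N.expF σ (fun y => f y - g y) = N.expF σ f - N.expF σ g := by
  simp only [expF, mul_sub, Finsupp.sum_sub]

theorem expF_const_mul (σ : N.Flow →₀ ℝ) (f : (Finset N.E → ℝ) → ℝ) (a : ℝ) :
    N.expF σ (fun y => a * f y) = a * N.expF σ f := by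
  simp only [expF, Finsupp.mul_sum, mul_left_comm]

theorem MixedF.expF_const {σ : N.Flow →₀ ℝ} (hσ : N.MixedF σ) (a : ℝ) :
    N.expF σ (fun _ => a) = a := by
  rw [expF, ← Finsupp.sum_mul, hσ.2, one_mul]

theorem MixedF.expF_mono {σ : N.Flow →₀ ℝ} (hσ : N.MixedF σ) {f g : (Finset N.E → ℝ) → ℝ}
    (h : ∀ y : N.Flow, f y.1 ≤ g y.1) : N.expF σ f ≤ N.expF σ g :=
  Finset.sum_le_sum fun y _ => mul_le_mul_of_nonneg_left (h y) (hσ.1 y)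

theorem expF_single (z : N.Flow) (f : (Finset N.E → ℝ) → ℝ) :
    N.expF (Finsupp.single z 1) f = f z.1 := by
  simp [expF]

theorem MixedF.single (z : N.Flow) : N.MixedF (Finsupp.single z 1) :=
  ⟨fun y => by rw [Finsupp.single_apply]; split_ifs <;> norm_num, by simp⟩

theorem u1_zero (p1 : ℝ) (μ : Finset N.E) : N.u1 p1 0 μ = 0 := by
  simp [u1, effVal, C1, edgeFlow]

theorem effVal_of_isCut {K : Finset N.E} (hK : N.IsCut K) (y : Finset N.E → ℝ) :
    N.effVal y K = 0 := by
  rw [effVal, Finset.filter_false_of_mem hK, Finset.sum_empty]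

theorem u2_of_isCut {K : Finset N.E} (hK : N.IsCut K) (p2 : ℝ) (y : Finset N.E → ℝ) :
    N.u2 p2 y K = p2 * N.val y - N.C2 K := by
  rw [u2, effVal_of_isCut hK, sub_zero]

theorem u2_empty (p2 : ℝ) (y : Finset N.E → ℝ) : N.u2 p2 y ∅ = 0 := by
  simp [u2, effVal, val, C2]

theorem expFA_eq_expF (σ1 : N.Flow →₀ ℝ) (σ2 : Finset N.E → ℝ)
    (g : (Finset N.E → ℝ) → Finset N.E → ℝ) :
    N.expFA σ1 σ2 g = N.expF σ1 (fun y => N.expA σ2 (g y)) :=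
  rfl

theorem MixedA.expA_u1 {σ : Finset N.E → ℝ} (hσ : N.MixedA σ) (p1 : ℝ) (y : Finset N.E → ℝ) :
    N.expA σ (N.u1 p1 y) = p1 * N.expA σ (N.effVal y) - N.C1 y := by
  change N.expA σ (fun μ => p1 * N.effVal y μ - N.C1 y) = _
  rw [expA_sub, expA_const_mul, hσ.expA_const]

theorem U1_eq {σ2 : Finset N.E → ℝ} (hσ2 : N.MixedA σ2) (p1 : ℝ) (σ1 : N.Flow →₀ ℝ) :
    N.U1 p1 σ1 σ2 = p1 * N.expFA σ1 σ2 N.effVal - N.expF σ1 N.C1 := by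
  rw [U1, expFA_eq_expF, expFA_eq_expF]
  simp only [hσ2.expA_u1]
  rw [expF_sub, expF_const_mul]

theorem MixedA.expA_u2 {σ : Finset N.E → ℝ} (hσ : N.MixedA σ) (p2 : ℝ) (y : Finset N.E → ℝ) :
    N.expA σ (N.u2 p2 y) = p2 * (N.val y - N.expA σ (N.effVal y)) - N.expA σ N.C2 := by
  change N.expA σ (fun μ => p2 * (N.val y - N.effVal y μ) - N.C2 μ) = _
  rw [expA_sub, expA_const_mul, expA_sub, hσ.expA_const]

theorem U2_eq {σ1 : N.Flow →₀ ℝ} {σ2 : Finset N.E → ℝ} (hσ1 : N.MixedF σ1) (hσ2 : N.MixedA σ2)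
    (p2 : ℝ) :
    N.U2 p2 σ1 σ2 = p2 * (N.expF σ1 N.val - N.expFA σ1 σ2 N.effVal) - N.expA σ2 N.C2 := by
  rw [U2, expFA_eq_expF, expFA_eq_expF]
  simp only [hσ2.expA_u2]
  rw [expF_sub, expF_const_mul, expF_sub, hσ1.expF_const]

theorem U1_le {σ1 : N.Flow →₀ ℝ} {σ2 : Finset N.E → ℝ} (hσ1 : N.MixedF σ1) (hσ2 : N.MixedA σ2)
    (p1 : ℝ) : N.U1 p1 σ1 σ2 ≤ p1 * N.expFA σ1 σ2 N.effVal - N.alpha * N.expF σ1 N.val := by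
  rw [U1_eq hσ2, ← expF_const_mul]
  exact sub_le_sub_left (hσ1.expF_mono fun y => alpha_mul_val_le_C1 y.2.1) _

namespace IsNE

variable {p1 p2 : ℝ} {σ1 : N.Flow →₀ ℝ} {σ2 : Finset N.E → ℝ}

theorem expA_u1_le (hNE : N.IsNE p1 p2 σ1 σ2) (z : N.Flow) :
    N.expA σ2 (N.u1 p1 z.1) ≤ N.U1 p1 σ1 σ2 := by
  simpa only [U1, expFA_eq_expF, expF_single] using hNE.2.2.1 _ (MixedF.single z)

theorem U1_nonneg (hNE : N.IsNE p1 p2 σ1 σ2) : 0 ≤ N.U1 p1 σ1 σ2 := by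
  simpa [expA, u1_zero] using hNE.expA_u1_le ⟨0, N.feasible_zero⟩

theorem le_U1 (hNE : N.IsNE p1 p2 σ1 σ2) (hp1 : 0 ≤ p1) {x : Finset N.E → ℝ}
    (hx : N.Assumption1 x) :
    (p1 - N.alpha) * N.Theta - p1 * N.expA σ2 N.C2 ≤ N.U1 p1 σ1 σ2 := by
  have hfeas := hx.1.1.1
  have hsurvive : N.Theta - N.expA σ2 N.C2 ≤ N.expA σ2 (N.effVal x) := by
    rw [← hNE.2.1.expA_const N.Theta, ← expA_sub, ← hx.1.1.val_eq_Theta]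
    exact hNE.2.1.expA_mono fun μ => by linarith [val_sub_effVal_le_C2 hfeas μ]
  calc (p1 - N.alpha) * N.Theta - p1 * N.expA σ2 N.C2
      = p1 * (N.Theta - N.expA σ2 N.C2) - N.alpha * N.Theta := by ring
    _ ≤ p1 * N.expA σ2 (N.effVal x) - N.C1 x := by rw [hx.C1_eq]; gcongr
    _ = N.expA σ2 (N.u1 p1 x) := (hNE.2.1.expA_u1 p1 x).symm
    _ ≤ N.U1 p1 σ1 σ2 := hNE.expA_u1_le ⟨x, hfeas⟩

theorem cut_deviation_bound (hNE : N.IsNE p1 p2 σ1 σ2) (hp1 : N.alpha < p1) {K : Finset N.E}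
    (hK : N.IsCut K) (hKΘ : N.C2 K = N.Theta) :
    p2 * (p1 * N.expFA σ1 σ2 N.effVal - N.alpha * N.expF σ1 N.val)
      ≤ (p1 - N.alpha) * N.Theta - p1 * N.expA σ2 N.C2 := by
  have hp1pos : 0 < p1 := N.alpha_nonneg.trans_lt hp1
  set q := 1 - N.alpha / p1 with hq
  have hq₀ : 0 ≤ q := by rw [hq, sub_nonneg, div_le_one hp1pos]; exact hp1.le
  have hq₁ : q ≤ 1 := by rw [hq, sub_le_self_iff]; exact div_nonneg N.alpha_nonneg hp1pos.le
  have hdev := hNE.2.2.2 _ (MixedA.single_add_single K ∅ hq₀ hq₁)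
  have hτ : N.U2 p2 σ1 (Pi.single K q + Pi.single ∅ (1 - q))
      = q * (p2 * N.expF σ1 N.val - N.Theta) := by
    simp only [U2, expFA_eq_expF, expA_single_add_single, u2_of_isCut hK, u2_empty, hKΘ,
      mul_zero, add_zero]
    rw [expF_const_mul, expF_sub, expF_const_mul, hNE.1.expF_const]
  rw [hτ, U2_eq hNE.1 hNE.2.1] at hdev
  have hpq : p1 * q = p1 - N.alpha := by rw [hq]; field_simp
  have := mul_le_mul_of_nonneg_left hdev hp1pos.le
  rw [← mul_assoc, hpq] at this
  linarith

end IsNE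

end Network

/-- under Assumption 1, if `p₁ > α` and `p₂ > 1`, then at every mixed Nash
equilibrium the expected attack cost satisfies `E_{σ²*}[C₂(μ)] = (1 − α/p₁)·Θ`
(using the max-flow min-cut theorem: some minimum cut has capacity `Θ`). -/
theorem expected_attack_cost (N : Network) (p1 p2 : ℝ)
    (hp1 : N.alpha < p1) (hp2 : 1 < p2)
    (hA1 : ∃ x, N.Assumption1 x)
    (hMFMC : ∃ K, N.IsMinCut K ∧ N.C2 K = N.Theta)
    (σ1 : N.Flow →₀ ℝ) (σ2 : Finset N.E → ℝ)
    (hNE : N.IsNE p1 p2 σ1 σ2) :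
    N.expA σ2 N.C2 = (1 - N.alpha / p1) * N.Theta := by
  obtain ⟨x, hx⟩ := hA1
  obtain ⟨K, hK, hKΘ⟩ := hMFMC
  have hp1pos : 0 < p1 := N.alpha_nonneg.trans_lt hp1
  set D := p1 * N.expFA σ1 σ2 N.effVal - N.alpha * N.expF σ1 N.val
  set X := (p1 - N.alpha) * N.Theta - p1 * N.expA σ2 N.C2
  have hU1_le : N.U1 p1 σ1 σ2 ≤ D := Network.U1_le hNE.1 hNE.2.1 p1
  have hD_nonneg : 0 ≤ D := hNE.U1_nonneg.trans hU1_le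
  have hX_le : X ≤ D := (hNE.le_U1 hp1pos.le hx).trans hU1_le
  have hX_ge : p2 * D ≤ X := hNE.cut_deviation_bound hp1 hK.1 hKΘ
  have hD : D = 0 := le_antisymm (by nlinarith) hD_nonneg
  have hX : X = 0 := by rw [hD, mul_zero] at hX_ge; linarith
  field_simp
  linarith
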